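/- Assume additionally L(y(0)) > 0 and let Ψ : (0, r₀) → ℝ be differentiable with Ψ'(s) = −ψ'(s)² for all s ∈ (0, r₀) (so Ψ is strictly decreasing). Then for every t ≥ 0 with L(y(t)) > 0 one has Ψ(L(y(t))) ≥ (σ_F²·σ₀²/4)·t + Ψ(L(y(0))); equivalently, the loss decays at the rate L(y(t)) ≤ Ψ⁻¹((σ_F²·σ₀²/4)·t + Ψ(L(y(0)))). -/

import Mathlib

open Filter MeasureTheory ProbabilityTheory
open scoped Topology NNReal

noncomputable def sigmaMin {E F : Type*} [NormedAddCommGroup E] [InnerProductSpace ℝ E]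
    [CompleteSpace E] [NormedAddCommGroup F] [InnerProductSpace ℝ F] [CompleteSpace F]
    (A : E →L[ℝ] F) : ℝ :=
  ⨅ w : {w : F // ‖w‖ = 1}, ‖ContinuousLinearMap.adjoint A w.1‖

/-!
Along the gradient flow the loss `ℓ(t) = f(θ(t))` decreases at rate `‖∇f(θ)‖²`. As long as `θ`
stays in the ball `B̄(θ₀, R)`, the chain rule `∇f = J_g* J_F* ∇L`, the injectivity bound on `J_F*`
and the bound `σ_min(J_g(θ)) ≥ σ₀/2` (from the Lipschitz condition on `J_g`) turn the KL inequality
for `L` into `ψ'(ℓ)·‖∇f(θ)‖ ≥ c := σ_F σ₀ / 2`. Then `‖θ'‖ = ‖∇f‖ ≤ -(ψ ∘ ℓ)'/c`, so the length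
of the path is at most `ψ(ℓ(0))/c = R' < R` and `θ` never leaves the ball. Finally
`(Ψ ∘ ℓ)' = ψ'(ℓ)²‖∇f(θ)‖² ≥ c²`, and integrating gives the rate.
-/

open Set Metric ContinuousLinearMap
open scoped Gradient

section Adjoint

variable {E F : Type*} [NormedAddCommGroup E] [InnerProductSpace ℝ E] [CompleteSpace E]
  [NormedAddCommGroup F] [InnerProductSpace ℝ F] [CompleteSpace F]

theorem sigmaMin_mul_norm_le_norm_adjoint_apply (A : E →L[ℝ] F) (w : F) :
    sigmaMin A * ‖w‖ ≤ ‖adjoint A w‖ := by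
  rcases eq_or_ne w 0 with rfl | hw
  · simp
  have hpos : 0 < ‖w‖ := norm_pos_iff.2 hw
  have hunit : ‖‖w‖⁻¹ • w‖ = 1 := by rw [norm_smul, norm_inv, norm_norm, inv_mul_cancel₀ hpos.ne']
  have hbdd : BddBelow (range fun v : {v : F // ‖v‖ = 1} => ‖adjoint A v.1‖) :=
    ⟨0, by rintro _ ⟨v, rfl⟩; exact norm_nonneg _⟩
  have hle : sigmaMin A ≤ ‖w‖⁻¹ * ‖adjoint A w‖ := by
    simpa [sigmaMin, norm_smul] using ciInf_le hbdd ⟨_, hunit⟩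
  rwa [← le_div_iff₀ hpos, ← inv_mul_eq_div]

theorem sub_mul_norm_le_norm_adjoint_apply {A B : E →L[ℝ] F} {σ δ : ℝ}
    (hA : ∀ w, σ * ‖w‖ ≤ ‖adjoint A w‖) (hBA : ‖B - A‖ ≤ δ) (w : F) :
    (σ - δ) * ‖w‖ ≤ ‖adjoint B w‖ := by
  have hdiff : ‖adjoint (B - A) w‖ ≤ δ * ‖w‖ :=
    ((adjoint (B - A)).le_opNorm w).trans <| by
      rw [LinearIsometryEquiv.norm_map]; gcongr
  have htri : ‖adjoint A w‖ - ‖adjoint B w‖ ≤ ‖adjoint (B - A) w‖ := by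
    rw [map_sub, sub_apply, norm_sub_rev]; exact norm_sub_norm_le _ _
  linarith [hA w]

theorem sigmaMin_nonneg (A : E →L[ℝ] F) : 0 ≤ sigmaMin A :=
  Real.iInf_nonneg fun _ => norm_nonneg _

theorem half_sigmaMin_mul_norm_le_norm_adjoint_apply {G : Type*} [NormedAddCommGroup G]
    {J : G → E →L[ℝ] F} {x₀ x : G} {R : ℝ} (hR : 0 < R) (hx : x ∈ closedBall x₀ R)
    (hJ : ‖J x - J x₀‖ ≤ sigmaMin (J x₀) / (2 * R) * ‖x - x₀‖) (w : F) :
    sigmaMin (J x₀) / 2 * ‖w‖ ≤ ‖adjoint (J x) w‖ := by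
  have hδ : ‖J x - J x₀‖ ≤ sigmaMin (J x₀) / 2 :=
    hJ.trans <| by
      have := sigmaMin_nonneg (J x₀)
      calc sigmaMin (J x₀) / (2 * R) * ‖x - x₀‖ ≤ sigmaMin (J x₀) / (2 * R) * R := by
            gcongr; rwa [← dist_eq_norm, ← mem_closedBall]
        _ = sigmaMin (J x₀) / 2 := by field_simp
  have := sub_mul_norm_le_norm_adjoint_apply (sigmaMin_mul_norm_le_norm_adjoint_apply _) hδ w
  rwa [sub_half] at this

theorem mul_mul_norm_le_norm_adjoint_comp {G : Type*} [NormedAddCommGroup G]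
    [InnerProductSpace ℝ G] [CompleteSpace G] {A : F →L[ℝ] G} {B : E →L[ℝ] F} {σA σB : ℝ}
    {z : G} (hσB : 0 ≤ σB) (hA : σA * ‖z‖ ≤ ‖adjoint A z‖)
    (hB : ∀ w, σB * ‖w‖ ≤ ‖adjoint B w‖) : σB * σA * ‖z‖ ≤ ‖adjoint (A ∘L B) z‖ := by
  rw [adjoint_comp, comp_apply, mul_assoc]
  exact (mul_le_mul_of_nonneg_left hA hσB).trans (hB _)

theorem gradient_comp {f : F → ℝ} {h : E → F} {x : E} (hf : DifferentiableAt ℝ f (h x))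
    (hh : DifferentiableAt ℝ h x) : ∇ (f ∘ h) x = adjoint (fderiv ℝ h x) (∇ f (h x)) :=
  ext_inner_right ℝ fun v => by
    rw [inner_gradient_left, adjoint_inner_left, inner_gradient_left, fderiv_comp x hf hh]; rfl

theorem le_mul_norm_gradient_comp {f : F → ℝ} {h : E → F} {x : E} {φ' : ℝ → ℝ} {σ : ℝ}
    (hf : DifferentiableAt ℝ f (h x)) (hh : DifferentiableAt ℝ h x) (hσ : 0 ≤ σ)
    (hlow : σ * ‖∇ f (h x)‖ ≤ ‖adjoint (fderiv ℝ h x) (∇ f (h x))‖)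
    (hKL : 1 ≤ φ' (f (h x)) * ‖∇ f (h x)‖) :
    σ ≤ φ' (f (h x)) * ‖∇ (f ∘ h) x‖ := by
  have hφ' : 0 ≤ φ' (f (h x)) := by
    by_contra! hneg
    nlinarith [norm_nonneg (∇ f (h x))]
  rw [gradient_comp hf hh]
  calc σ ≤ σ * (φ' (f (h x)) * ‖∇ f (h x)‖) := le_mul_of_one_le_right hσ hKL
    _ = φ' (f (h x)) * (σ * ‖∇ f (h x)‖) := by ring
    _ ≤ _ := mul_le_mul_of_nonneg_left hlow hφ'

end Adjoint

theorem mem_closedBall_of_norm_deriv_le {E : Type*} [NormedAddCommGroup E] [NormedSpace ℝ E]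
    {γ γ' : ℝ → E} {B B' : ℝ → ℝ} {a b r R : ℝ} (hab : a ≤ b)
    (hγ : ∀ x ∈ Icc a b, HasDerivAt γ (γ' x) x) (hB : ∀ x ∈ Icc a b, HasDerivAt B (B' x) x)
    (hBa : 0 ≤ B a) (hBr : ∀ x ∈ Icc a b, B x ≤ r) (hrR : r < R)
    (hspeed : ∀ x ∈ Ico a b, γ x ∈ closedBall (γ a) R → ‖γ' x‖ ≤ B' x) :
    ∀ x ∈ Icc a b, γ x ∈ closedBall (γ a) R := by
  -- The strict fencing theorem applies to the bound `B + ε (x - a + 1)`, which stays below `R`.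
  set ε := (R - r) / (b - a + 1) with hε
  have hεpos : 0 < ε := div_pos (by linarith) (by linarith)
  have hbudget : ∀ x ∈ Icc a b, B x + ε * (x - a + 1) ≤ R := by
    intro x hx
    have : ε * (x - a + 1) ≤ ε * (b - a + 1) := by gcongr; exact hx.2
    have hεR : ε * (b - a + 1) = R - r := div_mul_cancel₀ _ (by linarith)
    linarith [hBr x hx]
  have hfence : ∀ x ∈ Icc a b, ‖γ x - γ a‖ ≤ B x + ε * (x - a + 1) := by
    refine image_norm_le_of_norm_deriv_right_lt_deriv_boundary' (f' := γ')
      (B' := fun x => B' x + ε) ?_ ?_ ?_ ?_ ?_ ?_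
    · exact fun x hx => ((hγ x hx).continuousAt.sub continuousAt_const).continuousWithinAt
    · exact fun x hx => ((hγ x (Ico_subset_Icc_self hx)).sub_const _).hasDerivWithinAt
    · simp only [sub_self, norm_zero, zero_add, mul_one]; linarith
    · exact fun x hx => ((hB x hx).continuousAt.add (by fun_prop)).continuousWithinAt
    · intro x hx
      have := (hB x (Ico_subset_Icc_self hx)).add
        ((((hasDerivAt_id x).sub_const a).add_const 1).const_mul ε)
      rw [mul_one] at this
      exact this.hasDerivWithinAt
    · intro x hx heq
      have hball : γ x ∈ closedBall (γ a) R := by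
        rw [mem_closedBall, dist_eq_norm, heq]; exact hbudget x (Ico_subset_Icc_self hx)
      linarith [hspeed x hx hball]
  intro x hx
  rw [mem_closedBall, dist_eq_norm]
  exact (hfence x hx).trans (hbudget x hx)

section GradientFlow

variable {E : Type*} [NormedAddCommGroup E] [InnerProductSpace ℝ E] [CompleteSpace E]
  {f : E → ℝ} {θ : ℝ → E}

theorem hasDerivAt_comp_of_gradientFlow {u : ℝ} (hf : DifferentiableAt ℝ f (θ u))
    (hθ : HasDerivAt θ (-∇ f (θ u)) u) : HasDerivAt (f ∘ θ) (-‖∇ f (θ u)‖ ^ 2) u := by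
  have := hf.hasFDerivAt.comp_hasDerivAt u hθ
  rwa [← inner_gradient_left, inner_neg_right, real_inner_self_eq_norm_sq] at this

theorem antitoneOn_comp_of_gradientFlow (hf : Differentiable ℝ f) {s : Set ℝ} (hs : Convex ℝ s)
    (hθ : ∀ u ∈ s, HasDerivAt θ (-∇ f (θ u)) u) : AntitoneOn (f ∘ θ) s :=
  have hℓ := fun u hu => hasDerivAt_comp_of_gradientFlow (hf (θ u)) (hθ u hu)
  antitoneOn_of_hasDerivWithinAt_nonpos hs
    (fun u hu => (hℓ u hu).continuousAt.continuousWithinAt)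
    (fun u hu => (hℓ u (interior_subset hu)).hasDerivWithinAt)
    (fun _ _ => neg_nonpos.2 (sq_nonneg _))

variable {φ φ' : ℝ → ℝ} {a b c r₀ R : ℝ}

theorem gradientFlow_mem_closedBall (hf : Differentiable ℝ f) (hc : 0 < c) (hab : a ≤ b)
    (hθ : ∀ u ∈ Icc a b, HasDerivAt θ (-∇ f (θ u)) u)
    (hrange : ∀ u ∈ Icc a b, f (θ u) ∈ Ioo 0 r₀)
    (hφ : ∀ s ∈ Ioo 0 r₀, HasDerivAt φ (φ' s) s) (hφnonneg : ∀ s ∈ Ioo 0 r₀, 0 ≤ φ s)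
    (hKL : ∀ q ∈ closedBall (θ a) R, f q ∈ Ioo 0 r₀ → c ≤ φ' (f q) * ‖∇ f q‖)
    (hR : φ (f (θ a)) / c < R) :
    ∀ u ∈ Icc a b, θ u ∈ closedBall (θ a) R := by
  refine mem_closedBall_of_norm_deriv_le hab hθ (B := fun u => (φ (f (θ a)) - φ (f (θ u))) / c)
    (B' := fun u => φ' (f (θ u)) * ‖∇ f (θ u)‖ ^ 2 / c) ?_ (by simp) ?_ hR ?_
  · intro u hu
    have := ((hφ _ (hrange u hu)).comp u
      (hasDerivAt_comp_of_gradientFlow (hf (θ u)) (hθ u hu))).const_sub (φ (f (θ a)))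
    exact (this.div_const c).congr_deriv (by ring)
  · intro u hu
    gcongr
    linarith [hφnonneg _ (hrange u hu)]
  · intro u hu hball
    have hKLu := hKL (θ u) hball (hrange u (Ico_subset_Icc_self hu))
    rw [norm_neg, le_div_iff₀ hc]
    nlinarith [mul_le_mul_of_nonneg_right hKLu (norm_nonneg (∇ f (θ u)))]

theorem sq_mul_add_le_comp_gradientFlow {Φ : ℝ → ℝ} {t : ℝ} (hf : Differentiable ℝ f)
    (hc : 0 < c) (ht : 0 ≤ t) (hθ : ∀ u ∈ Icc 0 t, HasDerivAt θ (-∇ f (θ u)) u)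
    (hr₀ : f (θ 0) < r₀) (hpos : 0 < f (θ t))
    (hφ : ∀ s ∈ Ioo 0 r₀, HasDerivAt φ (φ' s) s) (hφnonneg : ∀ s ∈ Ioo 0 r₀, 0 ≤ φ s)
    (hΦ : ∀ s ∈ Ioo 0 r₀, HasDerivAt Φ (-(φ' s) ^ 2) s)
    (hKL : ∀ q ∈ closedBall (θ 0) R, f q ∈ Ioo 0 r₀ → c ≤ φ' (f q) * ‖∇ f q‖)
    (hR : φ (f (θ 0)) / c < R) :
    c ^ 2 * t + Φ (f (θ 0)) ≤ Φ (f (θ t)) := by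
  have hanti := antitoneOn_comp_of_gradientFlow hf (convex_Icc 0 t) hθ
  have hrange : ∀ u ∈ Icc 0 t, f (θ u) ∈ Ioo 0 r₀ := fun u hu =>
    ⟨hpos.trans_le (hanti hu (right_mem_Icc.2 ht) hu.2),
      (hanti (left_mem_Icc.2 ht) hu hu.1).trans_lt hr₀⟩
  have hball := gradientFlow_mem_closedBall hf hc ht hθ hrange hφ hφnonneg hKL hR
  have hderiv : ∀ u ∈ Icc 0 t, HasDerivAt (fun u => Φ (f (θ u)) - c ^ 2 * u)
      ((φ' (f (θ u)) * ‖∇ f (θ u)‖) ^ 2 - c ^ 2) u := by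
    intro u hu
    have := ((hΦ _ (hrange u hu)).comp u
      (hasDerivAt_comp_of_gradientFlow (hf (θ u)) (hθ u hu))).sub
      ((hasDerivAt_id u).const_mul (c ^ 2))
    exact this.congr_deriv (by ring)
  have hmono : MonotoneOn (fun u => Φ (f (θ u)) - c ^ 2 * u) (Icc 0 t) := by
    refine monotoneOn_of_hasDerivWithinAt_nonneg (convex_Icc 0 t)
      (fun u hu => (hderiv u hu).continuousAt.continuousWithinAt)
      (fun u hu => (hderiv u (interior_subset hu)).hasDerivWithinAt) fun u hu => ?_
    have hu := interior_subset hu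
    exact sub_nonneg.2 (pow_le_pow_left₀ hc.le (hKL (θ u) (hball u hu) (hrange u hu)) 2)
  have := hmono (left_mem_Icc.2 ht) (right_mem_Icc.2 ht) ht
  simp only [mul_zero, sub_zero] at this
  linarith

end GradientFlow

theorem stmt4_general
    {n m p : ℕ}
    (L : EuclideanSpace ℝ (Fin m) → ℝ)
    (F : EuclideanSpace ℝ (Fin n) → EuclideanSpace ℝ (Fin m))
    (g : EuclideanSpace ℝ (Fin p) → EuclideanSpace ℝ (Fin n))
    (hL : ContDiff ℝ 1 L)
    (hF : ContDiff ℝ 1 F)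
    (hg : ContDiff ℝ 1 g)
    (θ θ' : ℝ → EuclideanSpace ℝ (Fin p)) (θ₀ : EuclideanSpace ℝ (Fin p))
    (hθ0 : θ 0 = θ₀)
    (hθd : ∀ t ≥ (0:ℝ), HasDerivAt θ (θ' t) t)
    (hflow : ∀ t ≥ (0:ℝ), θ' t = -gradient (fun q => L (F (g q))) (θ t))
    (r₀ : ℝ) (hr₀ : L (F (g (θ 0))) < r₀)
    (ψ ψ' : ℝ → ℝ) (hψ0 : ψ 0 = 0)
    (hψmono : StrictMonoOn ψ (Set.Ico 0 r₀))
    (hψd : ∀ s ∈ Set.Ioo (0:ℝ) r₀, HasDerivAt ψ (ψ' s) s)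
    (hKL : ∀ v : EuclideanSpace ℝ (Fin m), 0 < L v → L v < r₀ →
      1 ≤ ψ' (L v) * ‖gradient L v‖)
    (σF : ℝ) (hσF : 0 < σF)
    (σ₀ : ℝ) (hσ₀ : σ₀ = sigmaMin (fderiv ℝ g θ₀)) (hσ₀pos : 0 < σ₀)
    (R : ℝ) (hRpos : 0 < R)
    (hinj : ∀ q ∈ Metric.closedBall θ₀ R,
      gradient L (F (g q)) ∈ LinearMap.range (fderiv ℝ F (g q) : EuclideanSpace ℝ (Fin n) →ₗ[ℝ] EuclideanSpace ℝ (Fin m)) ∧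
      ∀ z ∈ LinearMap.range (fderiv ℝ F (g q) : EuclideanSpace ℝ (Fin n) →ₗ[ℝ] EuclideanSpace ℝ (Fin m)),
        σF * ‖z‖ ≤ ‖ContinuousLinearMap.adjoint (fderiv ℝ F (g q)) z‖)
    (hLip : ∀ a ∈ Metric.closedBall θ₀ R, ∀ b ∈ Metric.closedBall θ₀ R,
      ‖fderiv ℝ g a - fderiv ℝ g b‖ ≤ σ₀ / (2 * R) * ‖a - b‖)
    (R' : ℝ) (hRdef : R' = 2 / (σF * σ₀) * ψ (L (F (g θ₀)))) (hRR : R' < R)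
    (Ψ : ℝ → ℝ) (hΨ : ∀ s ∈ Set.Ioo (0:ℝ) r₀, HasDerivAt Ψ (-(ψ' s) ^ 2) s) :
    ∀ t ≥ (0:ℝ), 0 < L (F (g (θ t))) →
      σF ^ 2 * σ₀ ^ 2 / 4 * t + Ψ (L (F (g (θ 0)))) ≤ Ψ (L (F (g (θ t)))) := by
  intro t ht hpos
  have hdL := hL.differentiable one_ne_zero
  have hdF := hF.differentiable one_ne_zero
  have hdg := hg.differentiable one_ne_zero
  have hKLball : ∀ q ∈ closedBall (θ 0) R, L (F (g q)) ∈ Ioo 0 r₀ →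
      σ₀ / 2 * σF ≤ ψ' (L (F (g q))) * ‖∇ (fun q => L (F (g q))) q‖ := by
    rw [hθ0]
    intro q hq hq'
    obtain ⟨hmem, hσF_low⟩ := hinj q hq
    refine le_mul_norm_gradient_comp (h := F ∘ g) (hdL _) ((hdF _).comp q (hdg q)) (by positivity)
      ?_ (hKL _ hq'.1 hq'.2)
    rw [fderiv_comp q (hdF _) (hdg q)]
    refine mul_mul_norm_le_norm_adjoint_comp (by positivity) (hσF_low _ hmem) fun w => ?_
    exact hσ₀ ▸ half_sigmaMin_mul_norm_le_norm_adjoint_apply hRpos hq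
      (hσ₀ ▸ hLip q hq θ₀ (mem_closedBall_self hRpos.le)) w
  have hψnonneg : ∀ s ∈ Ioo 0 r₀, 0 ≤ ψ s := fun s hs =>
    hψ0 ▸ (hψmono ⟨le_rfl, hs.1.trans hs.2⟩ (Ioo_subset_Ico_self hs) hs.1).le
  have := sq_mul_add_le_comp_gradientFlow (f := fun q => L (F (g q))) (φ := ψ) (Φ := Ψ)
    (hdL.comp (hdF.comp hdg)) (by positivity : 0 < σ₀ / 2 * σF) ht
    (fun u hu => hflow u hu.1 ▸ hθd u hu.1) hr₀ hpos hψd hψnonneg hΨ hKLball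
    (by rw [hθ0]; convert hRR using 1; rw [hRdef]; field_simp)
  convert this using 2
  ring

theorem stmt4
    {n m p : ℕ} (hn : 0 < n) (hm : 0 < m) (hp : 0 < p)
    (L : EuclideanSpace ℝ (Fin m) → ℝ)
    (F : EuclideanSpace ℝ (Fin n) → EuclideanSpace ℝ (Fin m))
    (g : EuclideanSpace ℝ (Fin p) → EuclideanSpace ℝ (Fin n))
    (hL : ContDiff ℝ 1 L)
    (hLnonneg : ∀ v, 0 ≤ L v) (hLmin : ∃ v, L v = 0)
    (hLgrad : ∀ s : Set (EuclideanSpace ℝ (Fin m)), Bornology.IsBounded s →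
      ∃ K : ℝ≥0, LipschitzOnWith K (fun v => gradient L v) s)
    (hF : ContDiff ℝ 1 F)
    (hJF : ∀ s : Set (EuclideanSpace ℝ (Fin n)), Bornology.IsBounded s →
      ∃ K : ℝ≥0, LipschitzOnWith K (fun x => fderiv ℝ F x) s)
    (hg : ContDiff ℝ 1 g)
    (hJg : ∀ s : Set (EuclideanSpace ℝ (Fin p)), Bornology.IsBounded s →
      ∃ K : ℝ≥0, LipschitzOnWith K (fun q => fderiv ℝ g q) s)
    (θ θ' : ℝ → EuclideanSpace ℝ (Fin p)) (θ₀ : EuclideanSpace ℝ (Fin p))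
    (hθ0 : θ 0 = θ₀)
    (hθd : ∀ t ≥ (0:ℝ), HasDerivAt θ (θ' t) t)
    (hθcont : ContinuousOn θ' (Set.Ici 0))
    (hflow : ∀ t ≥ (0:ℝ), θ' t = -gradient (fun q => L (F (g q))) (θ t))
    (r₀ : ℝ) (hr₀ : L (F (g (θ 0))) < r₀)
    (ψ ψ' : ℝ → ℝ) (hψ0 : ψ 0 = 0)
    (hψcont : ContinuousOn ψ (Set.Ico 0 r₀))
    (hψmono : StrictMonoOn ψ (Set.Ico 0 r₀))
    (hψd : ∀ s ∈ Set.Ioo (0:ℝ) r₀, HasDerivAt ψ (ψ' s) s)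
    (hKL : ∀ v : EuclideanSpace ℝ (Fin m), 0 < L v → L v < r₀ →
      1 ≤ ψ' (L v) * ‖gradient L v‖)
    (σF : ℝ) (hσF : 0 < σF)
    (σ₀ : ℝ) (hσ₀ : σ₀ = sigmaMin (fderiv ℝ g θ₀)) (hσ₀pos : 0 < σ₀)
    (R : ℝ) (hRpos : 0 < R)
    (hinj : ∀ q ∈ Metric.closedBall θ₀ R,
      gradient L (F (g q)) ∈ LinearMap.range (fderiv ℝ F (g q) : EuclideanSpace ℝ (Fin n) →ₗ[ℝ] EuclideanSpace ℝ (Fin m)) ∧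
      ∀ z ∈ LinearMap.range (fderiv ℝ F (g q) : EuclideanSpace ℝ (Fin n) →ₗ[ℝ] EuclideanSpace ℝ (Fin m)),
        σF * ‖z‖ ≤ ‖ContinuousLinearMap.adjoint (fderiv ℝ F (g q)) z‖)
    (hLip : ∀ a ∈ Metric.closedBall θ₀ R, ∀ b ∈ Metric.closedBall θ₀ R,
      ‖fderiv ℝ g a - fderiv ℝ g b‖ ≤ σ₀ / (2 * R) * ‖a - b‖)
    (R' : ℝ) (hRdef : R' = 2 / (σF * σ₀) * ψ (L (F (g θ₀)))) (hRR : R' < R)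
    (hL0pos : 0 < L (F (g (θ 0))))
    (Ψ : ℝ → ℝ) (hΨ : ∀ s ∈ Set.Ioo (0:ℝ) r₀, HasDerivAt Ψ (-(ψ' s) ^ 2) s) :
    ∀ t ≥ (0:ℝ), 0 < L (F (g (θ t))) →
      σF ^ 2 * σ₀ ^ 2 / 4 * t + Ψ (L (F (g (θ 0)))) ≤ Ψ (L (F (g (θ t)))) :=
  stmt4_general L F g hL hF hg θ θ' θ₀ hθ0 hθd hflow r₀ hr₀ ψ ψ' hψ0 hψmono hψd hKL σF hσF σ₀ hσ₀
    hσ₀pos R hRpos hinj hLip R' hRdef hRR Ψ hΨ
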